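/- Three-party greedy handshaking in PCL: for all propositional atoms a, b, c, the formula (((b ∧ c) ↠ a) ∧ ((a ∧ c) ↠ b) ∧ ((a ∧ b) ↠ c)) → (a ∧ b ∧ c) is a theorem of PCL. -/

import Mathlib

namespace Contracts

/-! ### PCL: propositional contract logic -/

inductive PCL (A : Type) : Type where
  | atom (a : A)
  | top
  | bot
  | and (p q : PCL A)
  | or (p q : PCL A)
  | imp (p q : PCL A)
  | cimp (p q : PCL A)    -- contractual implication ↠

namespace PCL

/-- Hilbert-style provability for PCL: intuitionistic propositional logic
extended with the axioms `⊤ ↠ ⊤`, `(p ↠ p) → p` and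
`(p' → p) → (p ↠ q) → (q → q') → (p' ↠ q')`. -/
inductive Proof {A : Type} : Set (PCL A) → PCL A → Prop where
  | ax {Γ : Set (PCL A)} {p} (h : p ∈ Γ) : Proof Γ p
  | mp {Γ} {p q} (h1 : Proof Γ (imp p q)) (h2 : Proof Γ p) : Proof Γ q
  | axK {Γ} {p q} : Proof Γ (imp p (imp q p))
  | axS {Γ} {p q r} : Proof Γ (imp (imp p (imp q r)) (imp (imp p q) (imp p r)))
  | andI {Γ} {p q} : Proof Γ (imp p (imp q (and p q)))
  | andE1 {Γ} {p q} : Proof Γ (imp (and p q) p)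
  | andE2 {Γ} {p q} : Proof Γ (imp (and p q) q)
  | orI1 {Γ} {p q} : Proof Γ (imp p (or p q))
  | orI2 {Γ} {p q} : Proof Γ (imp q (or p q))
  | orE {Γ} {p q r} : Proof Γ (imp (imp p r) (imp (imp q r) (imp (or p q) r)))
  | topI {Γ} : Proof Γ top
  | botE {Γ} {p} : Proof Γ (imp bot p)
  | cimpTop {Γ} : Proof Γ (cimp top top)
  | cimpFix {Γ} {p} : Proof Γ (imp (cimp p p) p)
  | cimpMono {Γ} {p p' q q'} :
      Proof Γ (imp (imp p' p) (imp (cimp p q) (imp (imp q q') (cimp p' q'))))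

end PCL

end Contracts

open Contracts

namespace Contracts.PCL.Proof

variable {A : Type} {Γ Δ : Set (PCL A)} {p q r p' q' : PCL A}

theorem weaken (hs : Γ ⊆ Δ) (h : Proof Γ p) : Proof Δ p := by
  induction h generalizing Δ with
  | ax h => exact .ax (hs h)
  | mp _ _ ih1 ih2 => exact .mp (ih1 hs) (ih2 hs)
  | axK => exact .axK
  | axS => exact .axS
  | andI => exact .andI
  | andE1 => exact .andE1
  | andE2 => exact .andE2
  | orI1 => exact .orI1
  | orI2 => exact .orI2
  | orE => exact .orE
  | topI => exact .topI
  | botE => exact .botE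
  | cimpTop => exact .cimpTop
  | cimpFix => exact .cimpFix
  | cimpMono => exact .cimpMono

theorem weaken_insert (h : Proof Γ p) : Proof (insert q Γ) p :=
  h.weaken (Set.subset_insert q Γ)

theorem assumption_insert : Proof (insert p Γ) p :=
  .ax (Set.mem_insert p Γ)

theorem imp_self : Proof Γ (imp p p) :=
  .mp (.mp (.axS (q := imp p p)) .axK) .axK

theorem imp_intro (h : Proof (insert p Γ) q) : Proof Γ (imp p q) := by
  generalize hΔ : insert p Γ = Δ at h
  induction h generalizing Γ with
  | ax h =>
    subst hΔ
    rcases h with rfl | h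
    · exact imp_self
    · exact .mp .axK (.ax h)
  | mp _ _ ih1 ih2 => exact .mp (.mp .axS (ih1 hΔ)) (ih2 hΔ)
  | axK => exact .mp .axK .axK
  | axS => exact .mp .axK .axS
  | andI => exact .mp .axK .andI
  | andE1 => exact .mp .axK .andE1
  | andE2 => exact .mp .axK .andE2
  | orI1 => exact .mp .axK .orI1
  | orI2 => exact .mp .axK .orI2
  | orE => exact .mp .axK .orE
  | topI => exact .mp .axK .topI
  | botE => exact .mp .axK .botE
  | cimpTop => exact .mp .axK .cimpTop
  | cimpFix => exact .mp .axK .cimpFix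
  | cimpMono => exact .mp .axK .cimpMono

theorem and_intro (hp : Proof Γ p) (hq : Proof Γ q) : Proof Γ (and p q) :=
  .mp (.mp .andI hp) hq

theorem and_left (h : Proof Γ (and p q)) : Proof Γ p :=
  .mp .andE1 h

theorem and_right (h : Proof Γ (and p q)) : Proof Γ q :=
  .mp .andE2 h

theorem cimp_mono (hp : Proof Γ (imp p' p)) (h : Proof Γ (cimp p q))
    (hq : Proof Γ (imp q q')) : Proof Γ (cimp p' q') :=
  .mp (.mp (.mp .cimpMono hp) h) hq

/-- Monotonicity turns `r ↠ p` into `p ↠ p`, and `(p ↠ p) → p`. -/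
theorem of_cimp_of_imp (hr : Proof Γ (cimp r p)) (hp : Proof Γ (imp p r)) : Proof Γ p :=
  .mp .cimpFix (cimp_mono hp hr imp_self)

theorem cimp_elim (h : Proof Γ (cimp p q)) (hp : Proof Γ p) : Proof Γ q :=
  of_cimp_of_imp h (.mp .axK hp)

theorem cimp_of_and_left (hp : Proof Γ p) (h : Proof Γ (cimp (and p r) q)) :
    Proof Γ (cimp r q) :=
  cimp_mono (imp_intro (and_intro hp.weaken_insert assumption_insert)) h imp_self

theorem handshake_two (hpq : Proof Γ (cimp p q)) (hqp : Proof Γ (cimp q p)) :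
    Proof Γ (and p q) :=
  have hp : Proof Γ p :=
    of_cimp_of_imp hqp (imp_intro (cimp_elim hpq.weaken_insert assumption_insert))
  and_intro hp (cimp_elim hpq hp)

/-- Once `p` is assumed, the contracts of the other two parties reduce to a two-party
handshake between `q` and `r`. -/
theorem handshake_three (hcp : Proof Γ (cimp (and q r) p))
    (hcq : Proof Γ (cimp (and p r) q)) (hcr : Proof Γ (cimp (and p q) r)) :
    Proof Γ (and p (and q r)) :=
  have hqr : Proof Γ (imp p (and q r)) := imp_intro <|
    handshake_two (cimp_of_and_left assumption_insert hcr.weaken_insert)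
      (cimp_of_and_left assumption_insert hcq.weaken_insert)
  have hp : Proof Γ p := of_cimp_of_imp hcp hqr
  and_intro hp (.mp hqr hp)

end Contracts.PCL.Proof

/-- Three-party greedy handshaking in PCL:
`⊢ ((b ∧ c) ↠ a) ∧ ((a ∧ c) ↠ b) ∧ ((a ∧ b) ↠ c) → a ∧ b ∧ c`. -/
theorem pcl_three_party_handshake {A : Type} (a b c : A) :
    PCL.Proof (∅ : Set (PCL A))
      (.imp
        (.and (.cimp (.and (.atom b) (.atom c)) (.atom a))
          (.and (.cimp (.and (.atom a) (.atom c)) (.atom b))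
            (.cimp (.and (.atom a) (.atom b)) (.atom c))))
        (.and (.atom a) (.and (.atom b) (.atom c)))) := by
  refine PCL.Proof.imp_intro (.handshake_three ?_ ?_ ?_)
  · exact .and_left .assumption_insert
  · exact .and_left (.and_right .assumption_insert)
  · exact .and_right (.and_right .assumption_insert)
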